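/- For all k ≥ 2, (k,1)-FWL is as powerful as (k+1)-WL: for every pair of colored graphs G, H, the (k,1)-FWL color histograms of G and H are equal if and only if the (k+1)-WL color histograms of G and H are equal. -/

import Mathlib

/-!
Common formalization of colored graphs, the k-dimensional Weisfeiler-Lehman (WL) test,
the (k,t)-dimensional Folklore WL test (k,t)-FWL and its extension (k,t)-FWL+, together
with the various specific refinement procedures (δ-k-LWL, GraphSNN, edge-based subgraph
refinement, KP-GNN, GDGNN, SLFWL(2), N²-FWL).

Convention: all colorings are formalized as explicitly-valued nested data (an injective
HASH is the identity).  "The stable colors (resp. color histograms) are equal" is rendered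
as "the colors (resp. color histograms) at every iteration l are equal"; since the colors
at iteration l determine those at every earlier iteration and the partitions stabilize on
finite graphs, this is equivalent to equality of the stable colors.
-/

open Finset

noncomputable section

/-- A finite colored, undirected, simple graph. -/
structure ColoredGraph (C : Type) where
  V : Type
  fintypeV : Fintype V
  decEqV : DecidableEq V
  adj : V → V → Prop
  symm : ∀ u v, adj u v → adj v u
  loopless : ∀ v, ¬ adj v v
  color : V → C

attribute [instance] ColoredGraph.fintypeV ColoredGraph.decEqV

/-- The data recording the isomorphism type of a `k`-tuple of vertices: the colors of the
entries, the equalities among entries, and the adjacencies among entries. -/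
abbrev IsoType (C : Type) (k : ℕ) : Type :=
  (Fin k → C) × (Fin k → Fin k → Prop) × (Fin k → Fin k → Prop)

namespace ColoredGraph

variable {C : Type}

/-- The isomorphism type of a `k`-tuple of vertices.  Two tuples (possibly in different
graphs) have the same isomorphism type iff these values are equal. -/
def isoType (G : ColoredGraph C) {k : ℕ} (v : Fin k → G.V) : IsoType C k :=
  (fun i => G.color (v i), fun i j => v i = v j, fun i j => G.adj (v i) (v j))

/-- The underlying simple graph. -/
def toSimple (G : ColoredGraph C) : SimpleGraph G.V where
  Adj := G.adj
  symm := ⟨by intro u v h; exact G.symm _ _ h⟩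
  loopless := ⟨by intro v h; exact G.loopless _ h⟩

/-- `Q₁(v)`: the set of neighbors of `v`. -/
def nbhd (G : ColoredGraph C) (v : G.V) : Finset G.V :=
  @Finset.filter _ (fun u => G.adj v u) (Classical.decPred _) Finset.univ

/-- `N₁(v)`: the closed neighborhood of `v`. -/
def closedNbhd (G : ColoredGraph C) (v : G.V) : Finset G.V :=
  @Finset.filter _ (fun u => u = v ∨ G.adj v u) (Classical.decPred _) Finset.univ

/-- `N_h(v)`: the set of vertices within `h` hops of `v` (including `v`). -/
def ball (G : ColoredGraph C) (h : ℕ) (v : G.V) : Finset G.V :=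
  @Finset.filter _ (fun u => ∃ p : G.toSimple.Walk v u, p.length ≤ h)
    (Classical.decPred _) Finset.univ

/-- `Q_d(v)`: the set of vertices at shortest-path distance exactly `d` from `v`. -/
def sphere (G : ColoredGraph C) (d : ℕ) (v : G.V) : Finset G.V :=
  @Finset.filter _ (fun u => G.toSimple.Reachable v u ∧ G.toSimple.dist v u = d)
    (Classical.decPred _) Finset.univ

/-- `SP(v₁,v₂)`: the set of vertices lying on shortest paths between `v₁` and `v₂`
(with `SP(v,v) = {v}`). -/
def spSet (G : ColoredGraph C) (v₁ v₂ : G.V) : Finset G.V :=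
  if v₁ = v₂ then {v₁}
  else
    @Finset.filter _
      (fun w => G.toSimple.Reachable v₁ w ∧ G.toSimple.Reachable w v₂ ∧
        G.toSimple.dist v₁ w + G.toSimple.dist w v₂ = G.toSimple.dist v₁ v₂)
      (Classical.decPred _) Finset.univ

/-- Isomorphism of colored graphs. -/
def Isomorphic (G H : ColoredGraph C) : Prop :=
  ∃ φ : G.V ≃ H.V,
    (∀ u v : G.V, G.adj u v ↔ H.adj (φ u) (φ v)) ∧ ∀ v : G.V, H.color (φ v) = G.color v

end ColoredGraph

variable {C : Type}

/-- The type of `t`-fold nested (hierarchical) multisets over `α`. -/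
def HMS (α : Type) : ℕ → Type
  | 0 => α
  | t + 1 => Multiset (HMS α t)

/-- The hierarchical multiset `{{x(w) : w ∈ S₁ × … × S_t}}_t`, grouped so that the
innermost multiset ranges over the first coordinate and the outermost over the last. -/
def hms {V α : Type} : (t : ℕ) → (Fin t → Finset V) → ((Fin t → V) → α) → HMS α t
  | 0, _, x => x finZeroElim
  | t + 1, S, x =>
      (S (Fin.last t)).val.map fun wl =>
        hms t (fun i => S i.castSucc) fun w => x (Fin.snoc w wl)

/-- Replace the entries of `v` at the given indices by the given values. -/
def replaceList {V : Type} {k : ℕ} (v : Fin k → V) : List (Fin k × V) → (Fin k → V)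
  | [] => v
  | p :: ps => Function.update (replaceList v ps) p.1 p.2

/-- The neighborhood tuple `Q^F_w(v)` of a `k`-tuple `v` with respect to a `t`-tuple `w`:
for each `m = 0, 1, …, min k t`, every `m`-subtuple of `w` (index sets in the fixed order
given by `List.sublistsLen`) is substituted into `v` at every increasing tuple of `m`
positions (in the fixed order given by `List.sublistsLen`), and all resulting `k`-tuples
are concatenated in this fixed order (for `m = 0` this contributes `v` itself). -/
def nbhdTuple {V : Type} (k t : ℕ) (v : Fin k → V) (w : Fin t → V) : List (Fin k → V) :=
  (List.range (min k t + 1)).flatMap fun m =>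
    ((List.finRange t).sublistsLen m).flatMap fun ws =>
      ((List.finRange k).sublistsLen m).map fun js =>
        replaceList v (js.zip (ws.map w))

/-! ### The k-WL colorings -/

/-- The type of `k`-WL colors at iteration `l`. -/
def WLColor (C : Type) (k : ℕ) : ℕ → Type
  | 0 => IsoType C k
  | l + 1 => WLColor C k l × (Fin k → Multiset (WLColor C k l))

/-- The `k`-WL coloring of `k`-tuples at iteration `l`. -/
def wlColor (G : ColoredGraph C) (k : ℕ) : (l : ℕ) → (Fin k → G.V) → WLColor C k l
  | 0, v => G.isoType v
  | l + 1, v =>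
      (wlColor G k l v,
        fun j => Finset.univ.val.map fun w => wlColor G k l (Function.update v j w))

/-- The `k`-WL color histogram of `G` at iteration `l`. -/
def wlHistogram (G : ColoredGraph C) (k l : ℕ) : Multiset (WLColor C k l) :=
  Finset.univ.val.map fun v => wlColor G k l v

/-! ### The (k,t)-FWL and (k,t)-FWL+ colorings -/

/-- The type of `(k,t)`-FWL(+) colors at iteration `l` (hierarchical multiset version). -/
def FWLColor (C : Type) (k t : ℕ) : ℕ → Type
  | 0 => IsoType C k
  | l + 1 => FWLColor C k t l × HMS (List (FWLColor C k t l)) t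

/-- The `(k,t)`-FWL+ coloring with the equivariant set `ES` given coordinatewise
(so that `w` ranges over `ES v 0 × … × ES v (t-1)`, aggregated hierarchically). -/
def fwlpColor (G : ColoredGraph C) (k t : ℕ) (ES : (Fin k → G.V) → Fin t → Finset G.V) :
    (l : ℕ) → (Fin k → G.V) → FWLColor C k t l
  | 0, v => G.isoType v
  | l + 1, v =>
      (fwlpColor G k t ES l v,
        hms t (ES v) fun w => (nbhdTuple k t v w).map fun u => fwlpColor G k t ES l u)

/-- The `(k,t)`-FWL coloring (all coordinates of `w` range over all vertices). -/
def fwlColor (G : ColoredGraph C) (k t : ℕ) : (l : ℕ) → (Fin k → G.V) → FWLColor C k t l :=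
  fwlpColor G k t fun _ _ => Finset.univ

/-- The `(k,t)`-FWL color histogram of `G` at iteration `l`. -/
def fwlHistogram (G : ColoredGraph C) (k t l : ℕ) : Multiset (FWLColor C k t l) :=
  Finset.univ.val.map fun v => fwlColor G k t l v

/-- The extended `(k,t)`-FWL color of a `(k+t)`-tuple `p = (v, w)`:
`C^{l+1}(p) = (C^l(u) : u ∈ Q^F_w(v))`, recorded here at level `l`. -/
def fwlExtColor (G : ColoredGraph C) (k t l : ℕ) (v : Fin k → G.V) (w : Fin t → G.V) :
    List (FWLColor C k t l) :=
  (nbhdTuple k t v w).map fun u => fwlColor G k t l u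

/-- The type of `(k,t)`-FWL+ colors at iteration `l` (plain multiset version). -/
def FWLPlainColor (C : Type) (k : ℕ) : ℕ → Type
  | 0 => IsoType C k
  | l + 1 => FWLPlainColor C k l × Multiset (List (FWLPlainColor C k l))

/-- The `(k,t)`-FWL+ coloring with equivariant set `ES` given coordinatewise, aggregated
as a plain multiset over `ES v 0 × … × ES v (t-1)`. -/
def fwlpPlainColor (G : ColoredGraph C) (k t : ℕ)
    (ES : (Fin k → G.V) → Fin t → Finset G.V) :
    (l : ℕ) → (Fin k → G.V) → FWLPlainColor C k l
  | 0, v => G.isoType v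
  | l + 1, v =>
      (fwlpPlainColor G k t ES l v,
        (Fintype.piFinset (ES v)).val.map fun w =>
          (nbhdTuple k t v w).map fun u => fwlpPlainColor G k t ES l u)

/-! ### δ-k-LWL -/

/-- The δ-k-LWL coloring. -/
def dklwlColor (G : ColoredGraph C) (k : ℕ) : (l : ℕ) → (Fin k → G.V) → WLColor C k l
  | 0, v => G.isoType v
  | l + 1, v =>
      (dklwlColor G k l v,
        fun j => (G.nbhd (v j)).val.map fun w => dklwlColor G k l (Function.update v j w))

/-! ### SLFWL(2) -/

/-- The type of SLFWL(2) colors at iteration `l`. -/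
def SLColor (C : Type) : ℕ → Type
  | 0 => IsoType C 2
  | l + 1 => SLColor C l × Multiset (SLColor C l × SLColor C l)

/-- The SLFWL(2) coloring of pairs of vertices. -/
def slColor (G : ColoredGraph C) : (l : ℕ) → G.V → G.V → SLColor C l
  | 0, v₁, v₂ => G.isoType ![v₁, v₂]
  | l + 1, v₁, v₂ =>
      (slColor G l v₁ v₂,
        (G.closedNbhd v₁ ∪ G.closedNbhd v₂).val.map fun w =>
          (slColor G l v₁ w, slColor G l w v₂))

/-! ### The edge-based subgraph refinement (as in I²-GNN) -/

/-- The type of edge-based subgraph refinement colors at iteration `l`. -/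
def EdgeColor (C : Type) : ℕ → Type
  | 0 => C × Prop × Prop
  | l + 1 => EdgeColor C l × Multiset (EdgeColor C l)

/-- The edge-based subgraph refinement: the color of `v₂` in the subgraph rooted at the
edge `(v₁, w₂)`; the initial color is `l_G(v₂)` together with markers for `v₂ = v₁` and
`v₂ = w₂`. -/
def edgeColor (G : ColoredGraph C) : (l : ℕ) → G.V → G.V → G.V → EdgeColor C l
  | 0, v₁, v₂, w₂ => (G.color v₂, v₂ = v₁, v₂ = w₂)
  | l + 1, v₁, v₂, w₂ =>
      (edgeColor G l v₁ v₂ w₂, (G.nbhd v₂).val.map fun w₁ => edgeColor G l v₁ w₁ w₂)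

/-- The graph color histogram of the edge-based subgraph refinement at iteration `l`:
`{{ {{ {{ C(v₁,v₂,w₂) : v₂ ∈ V }} : w₂ ∈ Q₁(v₁) }} : v₁ ∈ V }}`. -/
def edgeHistogram (G : ColoredGraph C) (l : ℕ) :
    Multiset (Multiset (Multiset (EdgeColor C l))) :=
  Finset.univ.val.map fun v₁ =>
    (G.nbhd v₁).val.map fun w₂ => Finset.univ.val.map fun v₂ => edgeColor G l v₁ v₂ w₂

/-! ### GraphSNN -/

/-- `V_{v₁v₂}`: the vertex set of the overlapping 1-hop subgraph between `v₁` and `v₂`. -/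
def snnOverlapVerts (G : ColoredGraph C) (v₁ v₂ : G.V) : Finset G.V :=
  G.closedNbhd v₁ ∩ G.closedNbhd v₂

/-- `|E_{v₁v₂}|`: the number of edges of `G` with both endpoints in `V_{v₁v₂}`
(ordered adjacent pairs counted once, i.e. divided by two). -/
def snnEdgeCount (G : ColoredGraph C) (v₁ v₂ : G.V) : ℝ :=
  ((@Finset.filter (G.V × G.V)
      (fun p => p.1 ∈ snnOverlapVerts G v₁ v₂ ∧ p.2 ∈ snnOverlapVerts G v₁ v₂ ∧
        G.adj p.1 p.2)
      (Classical.decPred _) Finset.univ).card : ℝ) / 2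

/-- The GraphSNN structural value `|E_{v₁v₂}|·|V_{v₁v₂}|^λ / (|V_{v₁v₂}|·(|V_{v₁v₂}|−1))`. -/
def snnVal (G : ColoredGraph C) (lam : ℝ) (v₁ v₂ : G.V) : ℝ :=
  (snnEdgeCount G v₁ v₂ * ((snnOverlapVerts G v₁ v₂).card : ℝ) ^ lam) /
    (((snnOverlapVerts G v₁ v₂).card : ℝ) * (((snnOverlapVerts G v₁ v₂).card : ℝ) - 1))

/-- The type of GraphSNN colors at iteration `l`. -/
def SNNColor (C : Type) : ℕ → Type
  | 0 => IsoType C 2 ⊕ ℝ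
  | l + 1 => (SNNColor C l × Multiset (SNNColor C l × SNNColor C l)) ⊕ ℝ

/-- The GraphSNN refinement: off-diagonal pairs get the fixed color `snnVal`; diagonal
pairs are refined iteratively. -/
def snnColor (G : ColoredGraph C) (lam : ℝ) : (l : ℕ) → G.V → G.V → SNNColor C l
  | 0, v₁, v₂ =>
      if v₁ = v₂ then Sum.inl (G.isoType ![v₁, v₂]) else Sum.inr (snnVal G lam v₁ v₂)
  | l + 1, v₁, v₂ =>
      if v₁ = v₂ then
        Sum.inl (snnColor G lam l v₁ v₂,
          (G.nbhd v₁).val.map fun w => (snnColor G lam l v₁ w, snnColor G lam l w w))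
      else Sum.inr (snnVal G lam v₁ v₂)

/-! ### KP-GNN (shortest-path-distance kernel, peripheral encoder as powerful as 1-WL) -/

/-- The type of KP-GNN colors at iteration `l`. -/
def KPColor (C : Type) : ℕ → Type
  | 0 => IsoType C 2 × ℕ
  | l + 1 => KPColor C l × (Multiset (KPColor C l × KPColor C l) ⊕ Multiset (KPColor C l))

/-- The KP-GNN refinement of pairs of vertices. -/
def kpColor (G : ColoredGraph C) : (l : ℕ) → G.V → G.V → KPColor C l
  | 0, v₁, v₂ => (G.isoType ![v₁, v₂], G.toSimple.dist v₁ v₂)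
  | l + 1, v₁, v₂ =>
      (kpColor G l v₁ v₂,
        if v₁ = v₂ then
          Sum.inl (Finset.univ.val.map fun w => (kpColor G l w w, kpColor G l v₁ w))
        else
          Sum.inr ((G.sphere (G.toSimple.dist v₁ v₂) v₁ ∩ G.nbhd v₂).val.map fun w =>
            kpColor G l v₁ w))

/-- The type of colors of the (2,1)-FWL+ instance corresponding to KP-GNN. -/
def KPFColor (C : Type) : ℕ → Type
  | 0 => IsoType C 2 × ℕ
  | l + 1 => KPFColor C l × Multiset (KPFColor C l)

/-- The (2,1)-FWL+ instance with `ES(v₁,v₂) = Q_{SPD(v₁,v₂)}(v₁) ∩ Q₁(v₂)` and initial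
color the isomorphism type together with `SPD(v₁,v₂)`. -/
def kpfColor (G : ColoredGraph C) : (l : ℕ) → G.V → G.V → KPFColor C l
  | 0, v₁, v₂ => (G.isoType ![v₁, v₂], G.toSimple.dist v₁ v₂)
  | l + 1, v₁, v₂ =>
      (kpfColor G l v₁ v₂,
        (G.sphere (G.toSimple.dist v₁ v₂) v₁ ∩ G.nbhd v₂).val.map fun w => kpfColor G l v₁ w)

/-! ### GDGNN -/

/-- The type of GDGNN colors at iteration `l`. -/
def GDColor (C : Type) : ℕ → Type
  | 0 => IsoType C 2
  | l + 1 => GDColor C l × Multiset (GDColor C l) × Multiset (GDColor C l)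

/-- The GDGNN refinement of pairs of vertices. -/
def gdColor (G : ColoredGraph C) : (l : ℕ) → G.V → G.V → GDColor C l
  | 0, v₁, v₂ => G.isoType ![v₁, v₂]
  | l + 1, v₁, v₂ =>
      (gdColor G l v₁ v₂,
        (G.nbhd v₂).val.map fun w => gdColor G l v₁ w,
        (G.spSet v₁ v₂).val.map fun w => gdColor G l v₁ w)

/-! ### N²-FWL -/

/-- The coordinatewise neighborhood of N²-FWL with hop parameter `h`:
`N²(v₁,v₂) = (N₁(v₂) × N₁(v₁)) ∩ (N_h(v₁) ∩ N_h(v₂))²`, written as a product. -/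
def n2ES (G : ColoredGraph C) (h : ℕ) (v : Fin 2 → G.V) : Fin 2 → Finset G.V :=
  ![G.closedNbhd (v 1) ∩ G.ball h (v 0) ∩ G.ball h (v 1),
    G.closedNbhd (v 0) ∩ G.ball h (v 0) ∩ G.ball h (v 1)]

/-- The N²-FWL coloring with hop parameter `h`:
the (2,2)-FWL+ instance with neighborhood `N²(v₁,v₂)`. -/
def n2Color (G : ColoredGraph C) (h : ℕ) : (l : ℕ) → (Fin 2 → G.V) → FWLColor C 2 2 l :=
  fwlpColor G 2 2 (n2ES G h)

end

noncomputable section Aux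
open Classical in
/-- Turn a multiset of options into an option of a multiset (none if any element is none). -/
noncomputable def seqO {β : Type} (s : Multiset (Option β)) : Option (Multiset β) :=
  if none ∈ s then none else some (s.bind fun o => o.elim 0 fun b => {b})

lemma seqO_map_some {α β : Type} (s : Multiset α) (f : α → β) :
    seqO (s.map fun a => some (f a)) = some (s.map f) := by
  classical
  rw [seqO, if_neg]
  · congr 1
    rw [Multiset.bind_map]
    simp [Multiset.bind_singleton, Option.elim]
  · simp

open Classical in
/-- Turn an option-valued family into an option of a family. -/
noncomputable def seqF {n : ℕ} {β : Type} (g : Fin n → Option β) : Option (Fin n → β) :=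
  if h : ∀ j, (g j).isSome then some (fun j => (g j).get (h j)) else none

lemma seqF_some {n : ℕ} {β : Type} (f : Fin n → β) :
    seqF (fun j => some (f j)) = some f := by
  rw [seqF, dif_pos] <;> simp

variable {C : Type}

/-- A substitution position compatible with precomposition by `ρ`. -/
noncomputable def nextIdx {n : ℕ} (ρ : Fin n → Fin n) (j : Fin n) : Fin n :=
  if h : ∃ c, ∀ i, ρ i ≠ c then Classical.choose h else ρ j

/-- The modified precomposition map after substitution at `j`. -/
noncomputable def updMap {n : ℕ} (ρ : Fin n → Fin n) (j : Fin n) : Fin n → Fin n :=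
  fun i => if i = j then nextIdx ρ j else ρ i

lemma update_comp {n : ℕ} {V : Type} [DecidableEq V]
    (ρ : Fin n → Fin n) (j : Fin n) (u : Fin n → V) (w : V) :
    Function.update (u ∘ ρ) j w = (Function.update u (nextIdx ρ j) w) ∘ (updMap ρ j) := by
  funext i
  by_cases hij : i = j
  · subst hij
    rw [Function.comp_apply, Function.update_self, updMap, if_pos rfl, Function.update_self]
  · have hne : ρ i ≠ nextIdx ρ j := by
      unfold nextIdx
      split
      · next h => exact Classical.choose_spec h i
      · next h =>
        push_neg at h
        have hsurj : Function.Surjective ρ := fun c => h c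
        have hinj : Function.Injective ρ := Finite.injective_iff_surjective.2 hsurj
        intro hc
        exact hij (hinj hc)
    simp [Function.comp_apply, updMap, hij, Function.update_of_ne, hne]

/-- Precomposition action on WL colors. -/
noncomputable def funcAct (n : ℕ) : (l : ℕ) → (Fin n → Fin n) → WLColor C n l → WLColor C n l
  | 0, ρ, x => (x.1 ∘ ρ, fun i j => x.2.1 (ρ i) (ρ j), fun i j => x.2.2 (ρ i) (ρ j))
  | l + 1, ρ, x =>
      (funcAct n l ρ x.1, fun j => (x.2 (nextIdx ρ j)).map (funcAct n l (updMap ρ j)))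

lemma funcAct_spec {n : ℕ} (G : ColoredGraph C) :
    ∀ (l : ℕ) (ρ : Fin n → Fin n) (u : Fin n → G.V),
      wlColor G n l (u ∘ ρ) = funcAct n l ρ (wlColor G n l u)
  | 0, ρ, u => by
    simp only [wlColor, funcAct, ColoredGraph.isoType]
    rfl
  | l + 1, ρ, u => by
    simp only [wlColor, funcAct]
    refine Prod.ext (funcAct_spec G l ρ u) ?_
    funext j
    simp only [Multiset.map_map, Function.comp]
    apply Multiset.map_congr rfl
    intro w _
    rw [update_comp, funcAct_spec G l (updMap ρ j) (Function.update u (nextIdx ρ j) w)]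

end Aux
section Pat

/-- The pattern of substitution positions in `nbhdTuple k 1`. -/
def pat (k : ℕ) : List (Option (Fin k)) :=
  none :: ((List.finRange k).sublistsLen 1).map (fun js => js.head?)

/-- Substituting `w` into `v` at the (optional) position `o`. -/
def elt {k : ℕ} {V : Type} (o : Option (Fin k)) (v : Fin k → V) (w : V) : Fin k → V :=
  o.elim v (fun j => Function.update v j w)

lemma nbhdTuple_one {k : ℕ} (hk : 1 ≤ k) {V : Type} (v : Fin k → V) (w : Fin 1 → V) :
    nbhdTuple k 1 v w = (pat k).map (fun o => elt o v (w 0)) := by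
  have hmin : min k 1 = 1 := Nat.min_eq_right hk
  have hfr : List.finRange 1 = [0] := by decide
  have hsl : List.sublistsLen 1 [(0 : Fin 1)] = [[0]] := by decide
  rw [nbhdTuple, hmin]
  have hr : List.range (1 + 1) = [0, 1] := rfl
  rw [hr, List.flatMap_cons, List.flatMap_cons, List.flatMap_nil, List.append_nil]
  rw [List.sublistsLen_zero, hfr, hsl]
  simp only [List.flatMap_cons, List.flatMap_nil, List.append_nil, List.sublistsLen_zero,
    List.map_cons, List.map_nil, List.zip_nil_right]
  rw [pat, List.map_cons, List.singleton_append]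
  congr 1
  rw [List.map_map]
  apply List.map_congr_left
  intro js hjs
  obtain ⟨hsub, hlen⟩ := List.mem_sublistsLen.1 hjs
  obtain ⟨j, rfl⟩ : ∃ j, js = [j] := by
    match js, hlen with
    | [j], _ => exact ⟨j, rfl⟩
  simp only [Function.comp_apply, List.head?_cons, elt, Option.elim]
  rfl

lemma mem_pat {k : ℕ} (o : Option (Fin k)) : o ∈ pat k := by
  rcases o with _ | j
  · exact List.mem_cons_self
  · rw [pat, List.mem_cons]
    right
    rw [List.mem_map]
    exact ⟨[j], List.mem_sublistsLen.2 ⟨List.singleton_sublist.2 (List.mem_finRange j), rfl⟩, rfl⟩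

/-- Decode a list produced by mapping over `pat k` back into a function. -/
def decode {k : ℕ} {α : Type} (L : List α) : Option (Fin k) → Option α :=
  fun o => L[List.idxOf o (pat k)]?

lemma decode_map {k : ℕ} {α : Type} (f : Option (Fin k) → α) :
    decode ((pat k).map f) = fun o => some (f o) := by
  funext o
  have hm : o ∈ pat k := mem_pat o
  have hlt : List.idxOf o (pat k) < (pat k).length :=
    List.idxOf_lt_length_iff.2 hm
  rw [decode, List.getElem?_map, List.getElem?_eq_getElem hlt, Option.map_some,
    List.getElem_idxOf hlt]

end Pat
section Struct

variable {C : Type}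

lemma wl_succ {n : ℕ} (G : ColoredGraph C) (l : ℕ) (v : Fin n → G.V) :
    wlColor G n (l + 1) v = (wlColor G n l v,
      fun j => Finset.univ.val.map fun w => wlColor G n l (Function.update v j w)) := rfl

lemma snoc_zero {V : Type} (w : Fin 0 → V) (z : V) : (Fin.snoc w z : Fin 1 → V) 0 = z := by
  have : (0 : Fin 1) = Fin.last 0 := rfl
  rw [this, Fin.snoc_last]

lemma fwl_succ {k : ℕ} (hk : 1 ≤ k) (G : ColoredGraph C) (l : ℕ) (v : Fin k → G.V) :
    fwlColor G k 1 (l + 1) v = (fwlColor G k 1 l v,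
      (Finset.univ.val.map fun z =>
        (pat k).map fun o => fwlColor G k 1 l (elt o v z) :
          Multiset (List (FWLColor C k 1 l)))) := by
  show fwlpColor G k 1 _ (l + 1) v = _
  rw [fwlpColor]
  refine Prod.ext rfl ?_
  show (Finset.univ.val.map fun wl =>
      (nbhdTuple k 1 v (Fin.snoc finZeroElim wl)).map (fwlpColor G k 1 _ l)) = _
  apply Multiset.map_congr rfl
  intro z _
  rw [nbhdTuple_one hk, snoc_zero, List.map_map]
  rfl

lemma update_snoc_last {n : ℕ} {V : Type} [DecidableEq V] (v : Fin n → V) (w z : V) :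
    Function.update (Fin.snoc v w : Fin (n + 1) → V) (Fin.last n) z = Fin.snoc v z := by
  funext i
  refine Fin.lastCases ?_ (fun i => ?_) i
  · rw [Function.update_self, Fin.snoc_last]
  · rw [Function.update_of_ne (Fin.castSucc_lt_last i).ne, Fin.snoc_castSucc, Fin.snoc_castSucc]

lemma update_snoc_castSucc {n : ℕ} {V : Type} [DecidableEq V] (v : Fin n → V) (w z : V)
    (i : Fin n) :
    Function.update (Fin.snoc v w : Fin (n + 1) → V) i.castSucc z =
      Fin.snoc (Function.update v i z) w := by
  rw [Fin.snoc_update]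

/-- The transposition of `castSucc i` and `last`. -/
def sigmaT {n : ℕ} (i : Fin n) : Fin (n + 1) → Fin (n + 1) :=
  fun x => if x = i.castSucc then Fin.last n else if x = Fin.last n then i.castSucc else x

lemma snoc_comp_sigmaT {n : ℕ} {V : Type} [DecidableEq V] (v : Fin n → V) (w z : V)
    (i : Fin n) :
    (Fin.snoc (Function.update v i w) z : Fin (n + 1) → V) ∘ sigmaT i =
      Fin.snoc (Function.update v i z) w := by
  funext x
  refine Fin.lastCases ?_ (fun x => ?_) x
  · have h2 : sigmaT i (Fin.last n) = i.castSucc := by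
      rw [sigmaT, if_neg (Fin.castSucc_lt_last i).ne', if_pos rfl]
    rw [Function.comp_apply, h2, Fin.snoc_castSucc, Function.update_self, Fin.snoc_last]
  · by_cases hx : x = i
    · subst hx
      have h2 : sigmaT x x.castSucc = Fin.last n := by rw [sigmaT, if_pos rfl]
      rw [Function.comp_apply, h2, Fin.snoc_last, Fin.snoc_castSucc, Function.update_self]
    · have h1 : x.castSucc ≠ i.castSucc := fun h => hx (Fin.castSucc_injective _ h)
      have h2 : sigmaT i x.castSucc = x.castSucc := by
        rw [sigmaT, if_neg h1, if_neg (Fin.castSucc_lt_last x).ne]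
      rw [Function.comp_apply, h2, Fin.snoc_castSucc, Fin.snoc_castSucc,
        Function.update_of_ne hx, Function.update_of_ne hx]

end Struct
section Phi

variable {C : Type}

/-- Index `0` of `Fin k` for `2 ≤ k`. -/
def idx0 {k : ℕ} (hk : 2 ≤ k) : Fin k := ⟨0, by omega⟩
/-- Index `1` of `Fin k` for `2 ≤ k`. -/
def idx1 {k : ℕ} (hk : 2 ≤ k) : Fin k := ⟨1, by omega⟩

/-- A companion index distinct from `i`. -/
def jjdx {k : ℕ} (hk : 2 ≤ k) (i : Fin k) : Fin k := if i = idx0 hk then idx1 hk else idx0 hk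

lemma jjdx_ne {k : ℕ} (hk : 2 ≤ k) (i : Fin k) : i ≠ jjdx hk i := by
  unfold jjdx
  split
  · next h => subst h; intro hc; exact absurd (congrArg Fin.val hc) (by simp [idx0, idx1])
  · next h => exact h

/-- Base case of the decoding function `Φ`. -/
noncomputable def phiBase {k : ℕ} (hk : 2 ≤ k) (p : Option (Fin k) → Option (IsoType C k)) :
    Option (IsoType C (k + 1)) :=
  (p none).bind fun b =>
    (p (some (idx0 hk))).bind fun b0 =>
      (p (some (idx1 hk))).bind fun b1 =>
        let bsel : Fin k → IsoType C k := fun i => if i = idx0 hk then b1 else b0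
        some
          (fun i => Fin.lastCases (b0.1 (idx0 hk)) (fun i' => b.1 i') i,
           fun i j =>
             Fin.lastCases (motive := fun _ => Prop)
               (Fin.lastCases (motive := fun _ => Prop) True
                 (fun j' => (bsel j').2.1 (jjdx hk j') j') j)
               (fun i' =>
                 Fin.lastCases (motive := fun _ => Prop)
                   ((bsel i').2.1 i' (jjdx hk i'))
                   (fun j' => b.2.1 i' j') j) i,
           fun i j =>
             Fin.lastCases (motive := fun _ => Prop)
               (Fin.lastCases (motive := fun _ => Prop) False
                 (fun j' => (bsel j').2.2 (jjdx hk j') j') j)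
               (fun i' =>
                 Fin.lastCases (motive := fun _ => Prop)
                   ((bsel i').2.2 i' (jjdx hk i'))
                   (fun j' => b.2.2 i' j') j) i)

/-- The decoding function from (k,1)-FWL colors to (k+1)-WL colors. -/
noncomputable def phiF {k : ℕ} (hk : 2 ≤ k) :
    (l : ℕ) → (Option (Fin k) → Option (FWLColor C k 1 l)) → Option (WLColor C (k + 1) l)
  | 0, p => phiBase hk p
  | l + 1, p =>
      (phiF hk l (fun o => (p o).map Prod.fst)).bind fun x0 =>
        (seqF (fun j : Fin (k + 1) =>
          Fin.lastCases (motive := fun _ => Option (Multiset (WLColor C (k + 1) l)))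
            ((p none).bind fun c =>
              seqO ((c.2 : Multiset (List (FWLColor C k 1 l))).map fun L =>
                phiF hk l (decode L)))
            (fun i =>
              (p (some i)).bind fun c =>
                seqO ((c.2 : Multiset (List (FWLColor C k 1 l))).map fun L =>
                  (phiF hk l (decode L)).map (funcAct (k + 1) l (sigmaT i))))
            j)).map fun f => (x0, f)

lemma fwl_zero {k : ℕ} (G : ColoredGraph C) (x : Fin k → G.V) :
    fwlColor G k 1 0 x = G.isoType x := rfl

lemma fwl_fst {k : ℕ} (G : ColoredGraph C) (l : ℕ) (x : Fin k → G.V) :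
    (fwlColor G k 1 (l + 1) x).1 = fwlColor G k 1 l x := rfl

lemma update_pair_eq₁ {k : ℕ} {V : Type} [DecidableEq V] (v : Fin k → V) (w : V)
    {i j : Fin k} (h : i ≠ j) :
    (Function.update v j w i = Function.update v j w j) = (v i = w) := by
  rw [Function.update_of_ne h, Function.update_self]

lemma update_pair_eq₂ {k : ℕ} {V : Type} [DecidableEq V] (v : Fin k → V) (w : V)
    {i j : Fin k} (h : i ≠ j) :
    (Function.update v j w j = Function.update v j w i) = (w = v i) := by
  rw [Function.update_of_ne h, Function.update_self]

lemma phiF_spec {k : ℕ} (hk : 2 ≤ k) (G : ColoredGraph C) :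
    ∀ (l : ℕ) (v : Fin k → G.V) (w : G.V),
      phiF hk l (fun o => some (fwlColor G k 1 l (elt o v w))) =
        some (wlColor G (k + 1) l (Fin.snoc v w)) := by
  intro l
  induction l with
  | zero =>
    intro v w
    show phiBase hk _ = _
    simp only [phiBase, fwl_zero, Option.bind_some]
    refine congrArg some ?_
    have h01 : idx0 hk ≠ idx1 hk := fun hc => absurd (congrArg Fin.val hc) (by simp [idx0, idx1])
    refine Prod.ext (funext fun i => ?_) (Prod.ext (funext fun i => funext fun j => ?_)
      (funext fun i => funext fun j => ?_)) <;>
      dsimp only [wlColor, ColoredGraph.isoType, elt, Option.elim]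
    · refine Fin.lastCases ?_ (fun i' => ?_) i <;>
        simp only [Fin.lastCases_last, Fin.lastCases_castSucc, Fin.snoc_last, Fin.snoc_castSucc,
          Function.update_self]
    · refine Fin.lastCases ?_ (fun i' => ?_) i
      · refine Fin.lastCases ?_ (fun j' => ?_) j
        · simp
        · simp only [Fin.lastCases_last, Fin.lastCases_castSucc, Fin.snoc_last, Fin.snoc_castSucc]
          by_cases hjj : j' = idx0 hk
          · simp [jjdx, hjj, Function.update_of_ne h01, Function.update_of_ne h01.symm]
          · simp [jjdx, hjj, Function.update_of_ne hjj, Function.update_of_ne (Ne.symm hjj)]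
      · refine Fin.lastCases ?_ (fun j' => ?_) j
        · simp only [Fin.lastCases_last, Fin.lastCases_castSucc, Fin.snoc_last, Fin.snoc_castSucc]
          by_cases hii : i' = idx0 hk
          · simp [jjdx, hii, Function.update_of_ne h01, Function.update_of_ne h01.symm]
          · simp [jjdx, hii, Function.update_of_ne hii, Function.update_of_ne (Ne.symm hii)]
        · simp only [Fin.lastCases_castSucc, Fin.snoc_castSucc]
    · refine Fin.lastCases ?_ (fun i' => ?_) i
      · refine Fin.lastCases ?_ (fun j' => ?_) j
        · simp only [Fin.lastCases_last, Fin.snoc_last]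
          exact (eq_false (G.loopless w)).symm
        · simp only [Fin.lastCases_last, Fin.lastCases_castSucc, Fin.snoc_last, Fin.snoc_castSucc]
          by_cases hjj : j' = idx0 hk
          · simp [jjdx, hjj, Function.update_of_ne h01, Function.update_of_ne h01.symm]
          · simp [jjdx, hjj, Function.update_of_ne hjj, Function.update_of_ne (Ne.symm hjj)]
      · refine Fin.lastCases ?_ (fun j' => ?_) j
        · simp only [Fin.lastCases_last, Fin.lastCases_castSucc, Fin.snoc_last, Fin.snoc_castSucc]
          by_cases hii : i' = idx0 hk
          · simp [jjdx, hii, Function.update_of_ne h01, Function.update_of_ne h01.symm]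
          · simp [jjdx, hii, Function.update_of_ne hii, Function.update_of_ne (Ne.symm hii)]
        · simp only [Fin.lastCases_castSucc, Fin.snoc_castSucc]
  | succ l ih =>
    intro v w
    have hk1 : 1 ≤ k := by omega
    simp only [phiF, Option.map_some, fwl_fst, Option.bind_some]
    have hm : (fun o => Option.map Prod.fst (some (fwlColor G k 1 (l + 1) (elt o v w)))) =
        fun o => some (fwlColor G k 1 l (elt o v w)) := rfl
    erw [hm]
    rw [ih v w, Option.bind_some]
    have hg : (fun j : Fin (k + 1) =>
        Fin.lastCases (motive := fun _ => Option (Multiset (WLColor C (k + 1) l)))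
          (seqO (Multiset.map (fun L => phiF hk l (decode L))
            ((fwlColor G k 1 (l + 1) (elt none v w)).2 : Multiset (List (FWLColor C k 1 l)))))
          (fun i =>
            seqO (Multiset.map
              (fun L => Option.map (funcAct (k + 1) l (sigmaT i)) (phiF hk l (decode L)))
              ((fwlColor G k 1 (l + 1) (elt (some i) v w)).2 :
                Multiset (List (FWLColor C k 1 l)))))
          j) =
        fun j => some (Finset.univ.val.map fun z =>
          wlColor G (k + 1) l (Function.update (Fin.snoc v w : Fin (k + 1) → G.V) j z)) := by
      funext j
      refine Fin.lastCases ?_ (fun i => ?_) j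
      · rw [Fin.lastCases_last]
        have h2 := fwl_succ hk1 G l (elt none v w)
        rw [h2]
        show seqO (Multiset.map _ (Multiset.map _ Finset.univ.val)) = _
        rw [Multiset.map_map]
        rw [Multiset.map_congr rfl (fun z _ => ?_), seqO_map_some]
        show phiF hk l (decode ((pat k).map fun o => fwlColor G k 1 l (elt o (elt none v w) z))) =
          some (wlColor G (k + 1) l (Function.update (Fin.snoc v w : Fin (k + 1) → G.V)
            (Fin.last k) z))
        rw [decode_map, ih (elt none v w) z, update_snoc_last]
        rfl
      · rw [Fin.lastCases_castSucc]
        have h2 := fwl_succ hk1 G l (elt (some i) v w)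
        rw [h2]
        show seqO (Multiset.map _ (Multiset.map _ Finset.univ.val)) = _
        rw [Multiset.map_map]
        rw [Multiset.map_congr rfl (fun z _ => ?_), seqO_map_some]
        show (phiF hk l (decode ((pat k).map fun o =>
            fwlColor G k 1 l (elt o (elt (some i) v w) z)))).map (funcAct (k + 1) l (sigmaT i)) =
          some (wlColor G (k + 1) l (Function.update (Fin.snoc v w : Fin (k + 1) → G.V)
            i.castSucc z))
        rw [decode_map, ih (elt (some i) v w) z, Option.map_some]
        refine congrArg some ?_
        rw [← funcAct_spec G l (sigmaT i) (Fin.snoc (elt (some i) v w) z)]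
        show wlColor G (k + 1) l
            ((Fin.snoc (Function.update v i w) z : Fin (k + 1) → G.V) ∘ sigmaT i) = _
        rw [snoc_comp_sigmaT, ← update_snoc_castSucc]
    rw [hg, seqF_some]
    erw [Option.map_some]
    rfl

end Phi
section Psi

variable {C : Type}

/-- The reindexing maps used to decode WL colors into FWL colors. -/
def rhoB {k : ℕ} (hk : 2 ≤ k) : Option (Fin k) → Fin (k + 1) → Fin (k + 1)
  | none => fun i => if i = Fin.last k then (idx0 hk).castSucc else i
  | some j => fun i =>
      if i = j.castSucc then Fin.last k
      else if i = Fin.last k then (if j = idx0 hk then Fin.last k else (idx0 hk).castSucc)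
      else i

/-- Extend a `k`-tuple to a `(k+1)`-tuple by duplicating its first entry. -/
def extT {k : ℕ} (hk : 2 ≤ k) {V : Type} (v : Fin k → V) : Fin (k + 1) → V :=
  Fin.snoc v (v (idx0 hk))

lemma snoc_comp_rhoB {k : ℕ} (hk : 2 ≤ k) {V : Type} [DecidableEq V]
    (o : Option (Fin k)) (v : Fin k → V) (z : V) :
    (Fin.snoc v z : Fin (k + 1) → V) ∘ rhoB hk o = extT hk (elt o v z) := by
  funext x
  rcases o with _ | j
  · refine Fin.lastCases ?_ (fun i => ?_) x
    · simp only [Function.comp_apply, rhoB, if_pos rfl, if_true, Fin.snoc_castSucc, extT, elt,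
        Option.elim, Fin.snoc_last]
    · simp only [Function.comp_apply, rhoB, if_neg (Fin.castSucc_lt_last i).ne,
        Fin.snoc_castSucc, extT, elt, Option.elim]
  · refine Fin.lastCases ?_ (fun i => ?_) x
    · have hne : Fin.last k ≠ j.castSucc := (Fin.castSucc_lt_last j).ne'
      by_cases hj : j = idx0 hk
      · simp only [Function.comp_apply, rhoB, if_neg hne, if_pos rfl, if_true, if_pos hj,
          Fin.snoc_last, extT, elt, Option.elim]
        rw [hj, Function.update_self]
      · simp only [Function.comp_apply, rhoB, if_neg hne, if_pos rfl, if_true, if_neg hj,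
          Fin.snoc_castSucc, extT, elt, Option.elim, Fin.snoc_last]
        rw [Function.update_of_ne (fun h => hj h.symm)]
    · by_cases hij : i = j
      · subst hij
        simp only [Function.comp_apply, rhoB, if_pos rfl, if_true, Fin.snoc_last, extT, elt,
          Option.elim, Fin.snoc_castSucc, Function.update_self]
      · have h1 : i.castSucc ≠ j.castSucc := fun h => hij (Fin.castSucc_injective _ h)
        simp only [Function.comp_apply, rhoB, if_neg h1,
          if_neg (Fin.castSucc_lt_last i).ne, Fin.snoc_castSucc, extT, elt, Option.elim,
          Function.update_of_ne hij]

/-- The decoding function from (k+1)-WL colors to (k,1)-FWL colors. -/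
noncomputable def psiF {k : ℕ} (hk : 2 ≤ k) :
    (l : ℕ) → WLColor C (k + 1) l → FWLColor C k 1 l
  | 0, b =>
      (fun i => b.1 i.castSucc, fun i j => b.2.1 i.castSucc j.castSucc,
        fun i j => b.2.2 i.castSucc j.castSucc)
  | l + 1, b =>
      (psiF hk l b.1,
        (Multiset.map (fun y => (pat k).map fun o => psiF hk l (funcAct (k + 1) l (rhoB hk o) y))
          (b.2 (Fin.last k)) : Multiset (List (FWLColor C k 1 l))))

lemma psiF_spec {k : ℕ} (hk : 2 ≤ k) (G : ColoredGraph C) :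
    ∀ (l : ℕ) (v : Fin k → G.V),
      psiF hk l (wlColor G (k + 1) l (extT hk v)) = fwlColor G k 1 l v := by
  intro l
  induction l with
  | zero =>
    intro v
    show _ = G.isoType v
    refine Prod.ext (funext fun i => ?_) (Prod.ext (funext fun i => funext fun j => ?_)
      (funext fun i => funext fun j => ?_)) <;>
      simp only [psiF, wlColor, ColoredGraph.isoType, extT, Fin.snoc_castSucc]
  | succ l ih =>
    intro v
    have hk1 : 1 ≤ k := by omega
    rw [fwl_succ hk1 G l v]
    refine Prod.ext ?_ ?_
    · show psiF hk l (wlColor G (k + 1) l (extT hk v)) = _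
      exact ih v
    · show Multiset.map _ ((wlColor G (k + 1) (l + 1) (extT hk v)).2 (Fin.last k)) = _
      show Multiset.map _ (Multiset.map
        (fun z => wlColor G (k + 1) l (Function.update (extT hk v) (Fin.last k) z))
        Finset.univ.val) = _
      rw [Multiset.map_map]
      apply Multiset.map_congr rfl
      intro z _
      show (pat k).map (fun o => psiF hk l (funcAct (k + 1) l (rhoB hk o)
          (wlColor G (k + 1) l (Function.update (extT hk v) (Fin.last k) z)))) = _
      have hupd : Function.update (extT hk v) (Fin.last k) z = (Fin.snoc v z : Fin (k + 1) → G.V) :=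
        update_snoc_last v (v (idx0 hk)) z
      rw [hupd]
      apply List.map_congr_left
      intro o _
      rw [← funcAct_spec G l (rhoB hk o) (Fin.snoc v z), snoc_comp_rhoB hk o v z, ih (elt o v z)]

end Psi
section Assemble

variable {C : Type}

/-- The snoc equivalence. -/
def snocEquiv (n : ℕ) (V : Type) : ((Fin n → V) × V) ≃ (Fin (n + 1) → V) where
  toFun p := Fin.snoc p.1 p.2
  invFun u := (fun i => u i.castSucc, u (Fin.last n))
  left_inv p := by
    refine Prod.ext ?_ ?_ <;> simp
  right_inv u := by
    funext x
    refine Fin.lastCases ?_ (fun i => ?_) x <;> simp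

lemma univ_map_snoc {n : ℕ} {V : Type} [Fintype V] [DecidableEq V] {α : Type}
    (f : (Fin (n + 1) → V) → α) :
    (Finset.univ.val.map f : Multiset α) =
      (Finset.univ.val : Multiset (Fin n → V)).bind fun v =>
        (Finset.univ.val : Multiset V).map fun z => f (Fin.snoc v z) := by
  have h1 : (Finset.univ : Finset (Fin (n + 1) → V)).val =
      ((Finset.univ : Finset ((Fin n → V) × V)).val).map (snocEquiv n V) := by
    rw [← Finset.map_univ_equiv (snocEquiv n V), Finset.map_val]
    rfl
  have h2 : ((Finset.univ : Finset ((Fin n → V) × V)).val) =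
      ((Finset.univ : Finset (Fin n → V)) ×ˢ (Finset.univ : Finset V)).val := by
    rw [Finset.univ_product_univ]
  have h3 : ((Finset.univ : Finset (Fin n → V)) ×ˢ (Finset.univ : Finset V)).val =
      (Finset.univ.val : Multiset (Fin n → V)).bind fun v =>
        (Finset.univ.val : Multiset V).map fun z => (v, z) := by
    rw [Finset.product_val]
    rfl
  rw [h1, h2, h3, Multiset.map_map, Multiset.map_bind]
  apply congrArg
  funext v
  rw [Multiset.map_map]
  rfl

lemma bind_const_map {α β V : Type} [Fintype V] (s : Multiset α) (g : α → β) :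
    (s.bind fun v => (Finset.univ.val : Multiset V).map fun _ => g v) =
      Fintype.card V • s.map g := by
  have h1 : ∀ v, ((Finset.univ.val : Multiset V).map fun _ => g v) =
      Multiset.replicate (Fintype.card V) (g v) := by
    intro v
    rw [show (fun _ : V => g v) = Function.const V (g v) from rfl, Multiset.map_const]
    rfl
  simp only [h1]
  induction (Fintype.card V) with
  | zero => simp
  | succ m ihm =>
    simp only [Multiset.replicate_succ, succ_nsmul']
    have h2 : ∀ v : α, (g v ::ₘ Multiset.replicate m (g v)) =
        ({g v} : Multiset β) + Multiset.replicate m (g v) := fun v => rfl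
    simp only [h2]
    rw [Multiset.bind_add, ihm, Multiset.bind_singleton]

end Assemble
section Final

variable {C : Type}

lemma histA {k : ℕ} (hk : 2 ≤ k) (G : ColoredGraph C) (l : ℕ) :
    wlHistogram G (k + 1) l = (fwlHistogram G k 1 (l + 1)).bind fun c =>
      ((c.2 : Multiset (List (FWLColor C k 1 l))).bind fun L =>
        (phiF hk l (decode L)).elim 0 fun x => ({x} : Multiset (WLColor C (k + 1) l))) := by
  rw [wlHistogram, fwlHistogram, Multiset.bind_map, univ_map_snoc (wlColor G (k + 1) l)]
  apply congrArg
  funext v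
  have h2 : ((fwlColor G k 1 (l + 1) v).2 : Multiset (List (FWLColor C k 1 l))) =
      Finset.univ.val.map (fun z => (pat k).map fun o => fwlColor G k 1 l (elt o v z)) := by
    rw [fwl_succ (by omega : 1 ≤ k) G l v]
  rw [h2]
  erw [Multiset.bind_map]
  rw [← Multiset.bind_singleton (Finset.univ.val)
    (fun z => wlColor G (k + 1) l (Fin.snoc v z))]
  apply congrArg
  funext z
  rw [decode_map, phiF_spec hk G l v z]
  rfl

lemma histB {k : ℕ} (hk : 2 ≤ k) (G : ColoredGraph C) (l : ℕ) :
    Multiset.map (fun y => psiF hk l (funcAct (k + 1) l (rhoB hk none) y))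
        (wlHistogram G (k + 1) l) =
      Fintype.card G.V • fwlHistogram G k 1 l := by
  rw [wlHistogram, Multiset.map_map]
  have h1 : ∀ u : Fin (k + 1) → G.V,
      psiF hk l (funcAct (k + 1) l (rhoB hk none) (wlColor G (k + 1) l u)) =
        fwlColor G k 1 l (fun i => u i.castSucc) := by
    intro u
    rw [← funcAct_spec G l (rhoB hk none) u]
    have hcomp : u ∘ rhoB hk none = extT hk (fun i => u i.castSucc) := by
      funext x
      refine Fin.lastCases ?_ (fun i => ?_) x
      · simp only [Function.comp_apply, rhoB, if_pos rfl, if_true, extT, Fin.snoc_last]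
      · simp only [Function.comp_apply, rhoB, if_neg (Fin.castSucc_lt_last i).ne, extT,
          Fin.snoc_castSucc]
    rw [hcomp, psiF_spec hk G l]
  simp only [Function.comp, h1]
  rw [univ_map_snoc (fun u => fwlColor G k 1 l (fun i => u i.castSucc))]
  have h2 : ∀ (v : Fin k → G.V) (z : G.V),
      (fun i => (Fin.snoc v z : Fin (k + 1) → G.V) i.castSucc) = v := by
    intro v z
    funext i
    simp
  simp only [h2]
  rw [bind_const_map, fwlHistogram]

lemma nsmul_cancel {α : Type} {n : ℕ} (hn : n ≠ 0) {s t : Multiset α} (h : n • s = n • t) :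
    s = t := by
  classical
  refine Multiset.ext.2 fun a => ?_
  have h' := congrArg (Multiset.count a) h
  rw [Multiset.count_nsmul, Multiset.count_nsmul] at h'
  exact Nat.eq_of_mul_eq_mul_left (Nat.pos_of_ne_zero hn) h'

end Final
/-- For `k ≥ 2`, `(k,1)`-FWL is as powerful as `(k+1)`-WL: the stable
`(k,1)`-FWL color histograms of two colored graphs are equal iff their stable `(k+1)`-WL
color histograms are equal. -/
theorem stmt_2 {C : Type} (k : ℕ) (hk : 2 ≤ k) (G H : ColoredGraph C) :
    (∀ l, fwlHistogram G k 1 l = fwlHistogram H k 1 l) ↔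
      (∀ l, wlHistogram G (k + 1) l = wlHistogram H (k + 1) l) := by
  constructor
  · intro hF l
    rw [histA hk G l, histA hk H l, hF (l + 1)]
  · intro hW l
    have hpow : (Fintype.card G.V) ^ (k + 1) = (Fintype.card H.V) ^ (k + 1) := by
      have h0 := congrArg Multiset.card (hW 0)
      rw [wlHistogram, wlHistogram, Multiset.card_map, Multiset.card_map] at h0
      simpa [Finset.card_univ, Fintype.card_fun] using h0
    have hcard : Fintype.card G.V = Fintype.card H.V :=
      Nat.pow_left_injective (by omega) hpow
    by_cases h0 : Fintype.card G.V = 0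
    · have hG : (Finset.univ.val : Multiset (Fin k → G.V)) = 0 := by
        rw [← Multiset.card_eq_zero]
        show Finset.univ.card = 0
        rw [Finset.card_univ, Fintype.card_fun, Fintype.card_fin, h0]
        exact Nat.zero_pow (by omega)
      have hH : (Finset.univ.val : Multiset (Fin k → H.V)) = 0 := by
        rw [← Multiset.card_eq_zero]
        show Finset.univ.card = 0
        rw [Finset.card_univ, Fintype.card_fun, Fintype.card_fin, ← hcard, h0]
        exact Nat.zero_pow (by omega)
      rw [fwlHistogram, fwlHistogram, hG, hH]
      rfl
    · apply nsmul_cancel h0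
      calc Fintype.card G.V • fwlHistogram G k 1 l
          = Multiset.map (fun y => psiF hk l (funcAct (k + 1) l (rhoB hk none) y))
              (wlHistogram G (k + 1) l) := (histB hk G l).symm
        _ = Multiset.map (fun y => psiF hk l (funcAct (k + 1) l (rhoB hk none) y))
              (wlHistogram H (k + 1) l) := by rw [hW l]
        _ = Fintype.card H.V • fwlHistogram H k 1 l := histB hk H l
        _ = Fintype.card G.V • fwlHistogram H k 1 l := by rw [hcard]
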